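/- If E ⊂ ℝ^d is measurable and H¹-thin, then E has Lebesgue measure zero. -/

import Mathlib

/-!
Letting `δ → 0` in the thinness inequality gives `∫_E g² ≤ ½ ∫ g²` for every `C¹` function `g`
with compact support. If `E` had positive (outer) measure, a Lebesgue density point `x` of `E`
would give radii `r < R` with `|E ∩ B̄(x, r)| > ½ |B(x, R)|`, and a smooth bump equal to `1` on
`B̄(x, r)` and supported in `B(x, R)` would violate that inequality.
-/

open MeasureTheory Metric Set

/-- `E ⊂ ℝ^d` is `H¹`-thin: there exist `C, δ₀ > 0` with
`∫_{E_δ} g² ≤ (1/2)∫ g² + Cδ²∫|∇g|²` for all `δ ∈ (0,δ₀)` and all `g ∈ H¹(ℝ^d)`,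
where `E_δ` is the open `δ`-neighborhood of `E`. -/
def H1Thin (d : ℕ) (E : Set (EuclideanSpace ℝ (Fin d))) : Prop :=
  ∃ C > (0 : ℝ), ∃ δ₀ > (0 : ℝ), ∀ δ ∈ Set.Ioo (0 : ℝ) δ₀,
    ∀ g : EuclideanSpace ℝ (Fin d) → ℝ, Differentiable ℝ g →
      MemLp g 2 volume → MemLp (fun x => ‖fderiv ℝ g x‖) 2 volume →
      ∫ x in Metric.thickening δ E, (g x) ^ 2 ≤
        (1 / 2) * (∫ x, (g x) ^ 2) + C * δ ^ 2 * ∫ x, ‖fderiv ℝ g x‖ ^ 2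

open Filter Topology ENNReal

theorem exists_mul_measure_ball_lt_measure_inter_closedBall {X : Type*} [MetricSpace X]
    [ProperSpace X] [SecondCountableTopology X] [HasBesicovitchCovering X] [MeasurableSpace X]
    [BorelSpace X] (μ : Measure X) [IsFiniteMeasureOnCompacts μ] {s : Set X} (hs : μ s ≠ 0)
    {c : ℝ≥0∞} (hc : c < 1) :
    ∃ x, ∃ r R, 0 < r ∧ r < R ∧ c * μ (ball x R) < μ (s ∩ closedBall x r) := by
  have : (ae (μ.restrict s)).NeBot := ae_neBot.2 (by rwa [Ne, Measure.restrict_eq_zero])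
  obtain ⟨x, hx⟩ := (Besicovitch.ae_tendsto_measure_inter_div μ s).exists
  obtain ⟨r, hcr, hr⟩ := ((hx.eventually (lt_mem_nhds hc)).and self_mem_nhdsWithin).exists
  have hball : Tendsto (fun R => μ (ball x R)) (𝓝[>] r) (𝓝 (μ (closedBall x r))) := by
    rw [← biInter_gt_ball]
    exact tendsto_measure_biInter_gt (fun _ _ => measurableSet_ball.nullMeasurableSet)
      (fun _ _ _ hij => ball_subset_ball hij) ⟨r + 1, by linarith, measure_ball_lt_top.ne⟩
  obtain ⟨R, hR, hrR⟩ := (((ENNReal.Tendsto.const_mul hball (Or.inr hc.ne_top)).eventually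
    (gt_mem_nhds (ENNReal.mul_lt_of_lt_div hcr))).and self_mem_nhdsWithin).exists
  exact ⟨x, r, R, hr, hrR, hR⟩

theorem ContDiff.memLp_norm_fderiv {X F : Type*} [NormedAddCommGroup X] [NormedSpace ℝ X]
    [NormedAddCommGroup F] [NormedSpace ℝ F] [MeasurableSpace X] [OpensMeasurableSpace X]
    {μ : Measure X} [IsFiniteMeasureOnCompacts μ] {g : X → F} (hg : ContDiff ℝ 1 g)
    (hgc : HasCompactSupport g) (p : ℝ≥0∞) : MemLp (fun x => ‖fderiv ℝ g x‖) p μ :=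
  (hg.continuous_fderiv one_ne_zero).norm.memLp_of_hasCompactSupport (hgc.fderiv (𝕜 := ℝ)).norm

namespace ContDiffBump

variable {X : Type*} [NormedAddCommGroup X] [NormedSpace ℝ X] [FiniteDimensional ℝ X]
  [MeasurableSpace X] [OpensMeasurableSpace X] {μ : Measure X} [IsFiniteMeasureOnCompacts μ]
  {c : X} (f : ContDiffBump c)

theorem integrable_sq : Integrable (fun x => f x ^ 2) μ :=
  (f.continuous.memLp_of_hasCompactSupport f.hasCompactSupport).integrable_sq

theorem measureReal_inter_closedBall_le_setIntegral_sq (s : Set X) :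
    μ.real (s ∩ closedBall c f.rIn) ≤ ∫ x in s, f x ^ 2 ∂μ := by
  have hone : ∀ᵐ x ∂μ.restrict (s ∩ closedBall c f.rIn), f x ^ 2 = 1 :=
    ae_restrict_of_ae_restrict_of_subset inter_subset_right <|
      ae_restrict_of_forall_mem measurableSet_closedBall fun x hx => by
        rw [f.one_of_mem_closedBall hx, one_pow]
  calc μ.real (s ∩ closedBall c f.rIn) = ∫ x in s ∩ closedBall c f.rIn, f x ^ 2 ∂μ := by
        rw [integral_congr_ae hone, setIntegral_const, smul_eq_mul, mul_one]
    _ ≤ ∫ x in s, f x ^ 2 ∂μ :=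
        setIntegral_mono_set f.integrable_sq.integrableOn
          (ae_of_all _ fun _ => sq_nonneg _) inter_subset_left.eventuallyLE

theorem integral_sq_le_measureReal_ball : ∫ x, f x ^ 2 ∂μ ≤ μ.real (ball c f.rOut) := by
  rw [← setIntegral_eq_integral_of_forall_compl_eq_zero (s := ball c f.rOut) fun x hx => by
    rw [f.zero_of_le_dist (not_lt.1 hx), zero_pow two_ne_zero]]
  calc ∫ x in ball c f.rOut, f x ^ 2 ∂μ ≤ ∫ _ in ball c f.rOut, (1 : ℝ) ∂μ :=
        setIntegral_mono f.integrable_sq.integrableOn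
          (integrableOn_const measure_ball_lt_top.ne) fun x => pow_le_one₀ f.nonneg f.le_one
    _ = μ.real (ball c f.rOut) := by rw [setIntegral_const, smul_eq_mul, mul_one]

end ContDiffBump

theorem H1Thin.setIntegral_sq_le_half {d : ℕ} {E : Set (EuclideanSpace ℝ (Fin d))}
    (hE : H1Thin d E) {g : EuclideanSpace ℝ (Fin d) → ℝ} (hg : Differentiable ℝ g)
    (hg2 : MemLp g 2 volume) (hg2' : MemLp (fun x => ‖fderiv ℝ g x‖) 2 volume) :
    ∫ x in E, g x ^ 2 ≤ 1 / 2 * ∫ x, g x ^ 2 := by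
  obtain ⟨C, -, δ₀, hδ₀, hthin⟩ := hE
  have hlim : Tendsto (fun δ : ℝ => (1 / 2 * ∫ x, g x ^ 2) + C * δ ^ 2 * ∫ x, ‖fderiv ℝ g x‖ ^ 2)
      (𝓝[>] 0) (𝓝 (1 / 2 * ∫ x, g x ^ 2)) := by
    refine tendsto_nhdsWithin_of_tendsto_nhds ?_
    simpa using (by fun_prop : Continuous fun δ : ℝ =>
      (1 / 2 * ∫ x, g x ^ 2) + C * δ ^ 2 * ∫ x, ‖fderiv ℝ g x‖ ^ 2).tendsto 0
  refine ge_of_tendsto hlim ?_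
  filter_upwards [Ioo_mem_nhdsGT hδ₀] with δ hδ
  calc ∫ x in E, g x ^ 2 ≤ ∫ x in thickening δ E, g x ^ 2 :=
        setIntegral_mono_set hg2.integrable_sq.integrableOn (ae_of_all _ fun _ => sq_nonneg _)
          (self_subset_thickening hδ.1 E).eventuallyLE
    _ ≤ _ := hthin δ hδ g hg hg2 hg2'

theorem stmt_13_general (d : ℕ) (E : Set (EuclideanSpace ℝ (Fin d)))
    (hthin : H1Thin d E) :
    volume E = 0 := by
  by_contra hE
  obtain ⟨x, r, R, hr, hrR, hlt⟩ :=
    exists_mul_measure_ball_lt_measure_inter_closedBall volume hE (c := 2⁻¹) (by norm_num)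
  let f : ContDiffBump x := ⟨r, R, hr, hrR⟩
  have hf : ContDiff ℝ 1 f := f.contDiff
  have hlt' : volume.real (ball x R) / 2 < volume.real (E ∩ closedBall x r) := by
    have := ENNReal.toReal_strict_mono (measure_ne_top_of_subset inter_subset_right
      measure_closedBall_lt_top.ne) hlt
    rwa [ENNReal.toReal_mul, ENNReal.toReal_inv, ENNReal.toReal_ofNat, inv_mul_eq_div] at this
  have hhalf := hthin.setIntegral_sq_le_half (hf.differentiable one_ne_zero)
    (f.continuous.memLp_of_hasCompactSupport f.hasCompactSupport)
    (hf.memLp_norm_fderiv f.hasCompactSupport 2)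
  linarith [f.measureReal_inter_closedBall_le_setIntegral_sq (μ := volume) E,
    f.integral_sq_le_measureReal_ball (μ := volume)]

/-- If `E ⊂ ℝ^d` is measurable and `H¹`-thin, then `E` has Lebesgue measure zero. -/
theorem stmt_13 (d : ℕ) (E : Set (EuclideanSpace ℝ (Fin d)))
    (hE : MeasurableSet E) (hthin : H1Thin d E) :
    volume E = 0 :=
  stmt_13_general d E hthin
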